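/- Let μ be the standard Gaussian measure N(0, I_d) on ℝ^d and let 0 < ε ≤ 1. Then sup{∫_A ‖x‖⁴ μ(dx) : A measurable, μ(A) ≤ ε} ≤ ε·(2d + 3ln(1/ε))² + 3ε·(2d + 3ln(1/ε)) + 9ε. -/

import Mathlib

/-!
A Chernoff-type argument. For `r, τ ≥ 0` one has `r² ≤ τ² + 3(τ + 3) e^{(r - τ)/3}`; take
`r = ‖x‖²` and integrate over `A`. The first term contributes `μ(A) τ² ≤ ε τ²`, the second at
most `3(τ + 3) e^{-τ/3} ∫ e^{‖x‖²/3} dμ = 3(τ + 3) e^{-τ/3} 3^{d/2}`. Since `√3 ≤ e^{2/3}` and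
`τ = 2d + 3 ln(1/ε)`, this is at most `3(τ + 3) e^{(2d - τ)/3} = 3(τ + 3) ε`.
-/

open MeasureTheory Real
open scoped ENNReal RealInnerProductSpace BigOperators

noncomputable section

/-- `ℝ^d` with the Euclidean norm. -/
abbrev Euc (d : ℕ) := EuclideanSpace ℝ (Fin d)

/-- Density of the Gaussian `N(0, σ²·I_d)` on `ℝ^d`. -/
def gaussDensity (d : ℕ) (σ2 : ℝ) (x : Euc d) : ℝ :=
  (2 * π * σ2) ^ (-(d : ℝ) / 2) * Real.exp (-‖x‖ ^ 2 / (2 * σ2))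

/-- Density `p̃_t = (M_{m_t ♯} P) * φ_{σ_t²}` of the Ornstein-Uhlenbeck (forward DDPM) process at
time `t` started at the probability measure `P`, where `m_t = e^{-t/2}`, `σ_t² = 1 - e^{-t}`. -/
def ouDensity {d : ℕ} (P : Measure (Euc d)) (t : ℝ) (x : Euc d) : ℝ :=
  ∫ y, gaussDensity d (1 - Real.exp (-t)) (x - y) ∂(P.map (fun z => Real.exp (-t / 2) • z))

/-- χ²-divergence `χ²(q‖p) = ∫ q²/p − 1` between densities on `ℝ^d`. -/
def chi2d {d : ℕ} (q p : Euc d → ℝ) : ℝ := (∫ x, q x ^ 2 / p x) - 1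

/-- KL divergence `KL(q‖p) = ∫ q ln(q/p)` between densities on `ℝ^d`. -/
def KLd {d : ℕ} (q p : Euc d → ℝ) : ℝ := ∫ x, q x * Real.log (q x / p x)

/-- Dirichlet form `ℰ_p(f) = ∫ ‖∇f‖² p`. -/
def dirichletForm {d : ℕ} (p f : Euc d → ℝ) : ℝ := ∫ x, ‖gradient f x‖ ^ 2 * p x

/-- `ψ = (q/p) / E_p[(q/p)²]`. -/
def psiFun {d : ℕ} (q p : Euc d → ℝ) (x : Euc d) : ℝ :=
  (q x / p x) / ∫ y, (q y / p y) ^ 2 * p y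

/-- χ²-divergence `χ²(P‖Q) = ∫ (dP/dQ)² dQ − 1` between measures. -/
def chi2M {α : Type*} [MeasurableSpace α] (P Q : Measure α) : ℝ :=
  (∫ x, ((P.rnDeriv Q) x).toReal ^ 2 ∂Q) - 1

/-- Total variation distance between measures. -/
def tvDist {α : Type*} [MeasurableSpace α] (P Q : Measure α) : ℝ :=
  sSup {r : ℝ | ∃ s : Set α, MeasurableSet s ∧ r = |(P s).toReal - (Q s).toReal|}

/-- Orlicz `ψ₂` (subgaussian) norm of a real random variable. -/
def psi2Norm {Ω : Type*} [MeasurableSpace Ω] (P : Measure Ω) (Z : Ω → ℝ) : ℝ :=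
  sInf {t : ℝ | 0 < t ∧ ∫ ω, Real.exp (Z ω ^ 2 / t ^ 2) ∂P ≤ 2}

/-- The standard Gaussian measure `N(0, I_d)` on `ℝ^d`. -/
def stdGaussian (d : ℕ) : Measure (Euc d) :=
  volume.withDensity (fun x => ENNReal.ofReal (gaussDensity d 1 x))

lemma gaussDensity_nonneg (d : ℕ) {σ2 : ℝ} (hσ2 : 0 ≤ σ2) (x : Euc d) : 0 ≤ gaussDensity d σ2 x :=
  mul_nonneg (rpow_nonneg (by positivity) _) (exp_nonneg _)

lemma continuous_gaussDensity (d : ℕ) (σ2 : ℝ) : Continuous (gaussDensity d σ2) := by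
  unfold gaussDensity
  fun_prop

lemma integral_stdGaussian (d : ℕ) (f : Euc d → ℝ) :
    ∫ x, f x ∂stdGaussian d = ∫ x, gaussDensity d 1 x * f x := by
  rw [stdGaussian, integral_withDensity_eq_integral_toReal_smul
    (continuous_gaussDensity d 1).measurable.ennreal_ofReal
    (ae_of_all _ fun _ ↦ ENNReal.ofReal_lt_top)]
  simp_rw [ENNReal.toReal_ofReal (gaussDensity_nonneg d zero_le_one _), smul_eq_mul]

lemma gaussDensity_one_mul_exp_mul_sq_norm (d : ℕ) (b : ℝ) (x : Euc d) :
    gaussDensity d 1 x * exp (b * ‖x‖ ^ 2) =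
      (2 * π) ^ (-(d : ℝ) / 2) * exp (-(1 / 2 - b) * ‖x‖ ^ 2) := by
  rw [gaussDensity, mul_assoc, ← exp_add, mul_one]
  ring_nf

lemma integral_exp_mul_sq_norm_stdGaussian (d : ℕ) {b : ℝ} (hb : b < 1 / 2) :
    ∫ x, exp (b * ‖x‖ ^ 2) ∂stdGaussian d = (1 - 2 * b) ^ (-(d : ℝ) / 2) := by
  have h2b : 0 < 1 - 2 * b := by linarith
  simp_rw [integral_stdGaussian, gaussDensity_one_mul_exp_mul_sq_norm, integral_const_mul]
  rw [GaussianFourier.integral_rexp_neg_mul_sq_norm (by linarith), finrank_euclideanSpace_fin,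
    show π / (1 / 2 - b) = 2 * π / (1 - 2 * b) by field_simp,
    div_rpow (by positivity) h2b.le, neg_div, rpow_neg (by positivity), rpow_neg h2b.le]
  field_simp

lemma integrable_exp_mul_sq_norm_stdGaussian (d : ℕ) {b : ℝ} (hb : b < 1 / 2) :
    Integrable (fun x ↦ exp (b * ‖x‖ ^ 2)) (stdGaussian d) :=
  .of_integral_ne_zero <| by
    rw [integral_exp_mul_sq_norm_stdGaussian d hb]
    exact (rpow_pos_of_pos (by linarith) _).ne'

lemma three_rpow_le_exp {p : ℝ} (hp : 0 ≤ p) : (3 : ℝ) ^ p ≤ exp (4 / 3 * p) := by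
  have h : (3 : ℝ) ≤ exp (4 / 3) := by
    calc (3 : ℝ) ≤ (1 / 3 + 1) ^ 4 := by norm_num
      _ ≤ exp (1 / 3) ^ 4 := by gcongr; exact add_one_le_exp _
      _ = exp (4 / 3) := by rw [← exp_nat_mul]; norm_num
  calc (3 : ℝ) ^ p ≤ exp (4 / 3) ^ p := by gcongr
    _ = exp (4 / 3 * p) := by rw [← exp_mul]

lemma sq_le_sq_add_mul_exp_sub {r τ : ℝ} (hr : 0 ≤ r) (hτ : 0 ≤ τ) :
    r ^ 2 ≤ τ ^ 2 + 3 * (τ + 3) * exp ((r - τ) / 3) := by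
  rcases le_or_gt r τ with hrτ | hτr
  · nlinarith [exp_pos ((r - τ) / 3)]
  · set s := r - τ
    have hs : 0 ≤ s := by linarith
    -- `r ^ 2 - τ ^ 2 = 2 * τ * s + s ^ 2` is beaten by the cubic Taylor polynomial of `exp (s / 3)`
    have hexp : 1 + s / 3 + (s / 3) ^ 2 / 2 + (s / 3) ^ 3 / 6 ≤ exp (s / 3) := by
      simpa [Finset.sum_range_succ, Nat.factorial] using
        sum_le_exp_of_nonneg (div_nonneg hs zero_le_three) 4
    nlinarith [mul_nonneg hτ (sq_nonneg (s - 3)), mul_nonneg hs (sq_nonneg (s - 9 / 2)),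
      mul_nonneg hτ hs]

theorem stmt_12_general {d : ℕ} (ε : ℝ) (hε0 : 0 < ε) (hε1 : ε ≤ 1)
    (A : Set (Euc d)) (hAε : stdGaussian d A ≤ ENNReal.ofReal ε) :
    (∫ x in A, ‖x‖ ^ 4 ∂(stdGaussian d)) ≤
      ε * (2 * d + 3 * Real.log (1 / ε)) ^ 2 + 3 * ε * (2 * d + 3 * Real.log (1 / ε)) + 9 * ε := by
  set μ := stdGaussian d
  set τ := 2 * (d : ℝ) + 3 * log (1 / ε)
  have hτ : 0 ≤ τ := by have := log_nonneg (one_le_one_div hε0 hε1); positivity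
  set c := 3 * (τ + 3) * exp (-τ / 3)
  have hpointwise (x : Euc d) : ‖x‖ ^ 4 ≤ τ ^ 2 + c * exp (1 / 3 * ‖x‖ ^ 2) := by
    have := sq_le_sq_add_mul_exp_sub (sq_nonneg ‖x‖) hτ
    rw [sub_div, sub_eq_neg_add, exp_add] at this
    convert this using 1
    · ring
    · simp only [c]; ring_nf
  have hmoment : c * ∫ x, exp (1 / 3 * ‖x‖ ^ 2) ∂μ ≤ 3 * (τ + 3) * ε := by
    have hε : exp (2 * d / 3) * exp (-τ / 3) = ε := by
      rw [← exp_add, show 2 * (d : ℝ) / 3 + -τ / 3 = -log (1 / ε) by ring, one_div, log_inv,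
        neg_neg, exp_log hε0]
    rw [integral_exp_mul_sq_norm_stdGaussian d (by norm_num), ← hε]
    calc c * (1 - 2 * (1 / 3) : ℝ) ^ (-(d : ℝ) / 2) = c * 3 ^ ((d : ℝ) / 2) := by
          rw [neg_div, rpow_neg (by norm_num), ← inv_rpow (by norm_num)]; norm_num
      _ ≤ c * exp (4 / 3 * ((d : ℝ) / 2)) := by gcongr; exact three_rpow_le_exp (by positivity)
      _ = _ := by simp only [c]; ring_nf
  have hμA : μ.real A ≤ ε := ENNReal.toReal_le_of_le_ofReal hε0.le hAε
  have hconst : IntegrableOn (fun _ ↦ τ ^ 2) A μ :=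
    integrableOn_const (ne_top_of_le_ne_top ENNReal.ofReal_ne_top hAε)
  have hexp := integrable_exp_mul_sq_norm_stdGaussian d (b := 1 / 3) (by norm_num)
  have hexpA : IntegrableOn (fun x ↦ c * exp (1 / 3 * ‖x‖ ^ 2)) A μ :=
    (hexp.const_mul c).integrableOn
  have hbound : IntegrableOn (fun x ↦ τ ^ 2 + c * exp (1 / 3 * ‖x‖ ^ 2)) A μ := hconst.add hexpA
  calc ∫ x in A, ‖x‖ ^ 4 ∂μ ≤ ∫ x in A, (τ ^ 2 + c * exp (1 / 3 * ‖x‖ ^ 2)) ∂μ :=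
        integral_mono_of_nonneg (ae_of_all _ fun _ ↦ by positivity) hbound
          (ae_of_all _ hpointwise)
    _ = μ.real A * τ ^ 2 + c * ∫ x in A, exp (1 / 3 * ‖x‖ ^ 2) ∂μ := by
        rw [integral_add hconst hexpA, setIntegral_const, integral_const_mul, smul_eq_mul]
    _ ≤ ε * τ ^ 2 + c * ∫ x, exp (1 / 3 * ‖x‖ ^ 2) ∂μ := by
        gcongr
        exacts [ae_of_all _ fun _ ↦ (exp_pos _).le, Measure.restrict_le_self]
    _ ≤ ε * τ ^ 2 + 3 * ε * τ + 9 * ε := by linarith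

/-- For the standard Gaussian `μ = N(0,I_d)` and `0 < ε ≤ 1`:
`sup { ∫_A ‖x‖⁴ dμ : μ(A) ≤ ε } ≤ ε (2d + 3 ln(1/ε))² + 3ε (2d + 3 ln(1/ε)) + 9ε`. -/
theorem stmt_12 {d : ℕ} (ε : ℝ) (hε0 : 0 < ε) (hε1 : ε ≤ 1)
    (A : Set (Euc d)) (hA : MeasurableSet A) (hAε : stdGaussian d A ≤ ENNReal.ofReal ε) :
    (∫ x in A, ‖x‖ ^ 4 ∂(stdGaussian d)) ≤
      ε * (2 * d + 3 * Real.log (1 / ε)) ^ 2 + 3 * ε * (2 * d + 3 * Real.log (1 / ε)) + 9 * ε :=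
  stmt_12_general ε hε0 hε1 A hAε
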